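/- arXiv:1510.05627 — 4 statements merged into one kernel-verified Lean document; each statement's English description precedes it below -/
import Mathlib

section
/- With g_i(p) = (1-p)^i - p^i, x = p(1-p), f_i(p) = g_{i-1}(p)/g_i(p), and L_m(p) defined by L_2(p)=1, L_m(p) = f_m(p) + L_{m-1}(p)(f_m(p)-1), one has for all m ≥ 2: f_m(p)·L_m(p) = (1/g_m(p)^2) · Σ_{i=1}^{m-1} x^{m-i-1} g_i(p)^2, provided g_i(p) ≠ 0 for all 2 ≤ i ≤ m and p ≠ 1/2. -/
/-- g_i(p) = (1-p)^i - p^i. -/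
noncomputable def g (p : ℝ) (i : ℕ) : ℝ := (1 - p) ^ i - p ^ i

/-- f_i(p) = g_{i-1}(p)/g_i(p). -/
noncomputable def f (p : ℝ) (i : ℕ) : ℝ := g p (i - 1) / g p i

/-- L_2 = 1, L_m = f_m + L_{m-1} (f_m - 1). -/
noncomputable def L (p : ℝ) : ℕ → ℝ
  | 0 => 1
  | 1 => 1
  | 2 => 1
  | (n + 3) => f p (n + 3) + L p (n + 2) * (f p (n + 3) - 1)

/-!
The sums `S_m = ∑_{i=1}^{m-1} x^{m-i-1} g_i²` satisfy `S_{m+1} = x S_m + g_m²`, and `g` satisfies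
the linear recurrence `g_{m+1} = g_m - x g_{m-1}` (its characteristic roots are `1 - p` and `p`).
Together with the recursion for `L` these give `g_{m-1} g_m L_m = S_m` by induction on `m`, and
dividing by `g_m²` is the claim.
-/

open Finset

noncomputable def weightedSum (p : ℝ) (m : ℕ) : ℝ :=
  ∑ i ∈ Icc 1 (m - 1), (p * (1 - p)) ^ (m - i - 1) * g p i ^ 2

lemma g_add_two (p : ℝ) (i : ℕ) : g p (i + 2) = g p (i + 1) - p * (1 - p) * g p i := by
  simp only [g]; ring

lemma g_two (p : ℝ) : g p 2 = g p 1 := by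
  simp only [g]; ring

lemma L_succ (p : ℝ) {m : ℕ} (hm : 2 ≤ m) :
    L p (m + 1) = f p (m + 1) + L p m * (f p (m + 1) - 1) := by
  obtain ⟨k, rfl⟩ := Nat.exists_eq_add_of_le' hm
  rfl

lemma weightedSum_succ (p : ℝ) (m : ℕ) :
    weightedSum p (m + 1) = p * (1 - p) * weightedSum p m + g p m ^ 2 := by
  rcases m with _ | n
  · simp [weightedSum, g]
  · rw [weightedSum, weightedSum, Nat.add_sub_cancel, sum_Icc_succ_top (by omega), mul_sum]
    congr 1
    · refine sum_congr rfl fun i hi => ?_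
      rw [mem_Icc] at hi
      rw [show n + 1 + 1 - i - 1 = n + 1 - i - 1 + 1 by omega, pow_succ]
      ring
    · simp

lemma g_pred_mul_g_mul_L (p : ℝ) {m : ℕ} (hm : 2 ≤ m)
    (hg : ∀ i, 3 ≤ i → i ≤ m → g p i ≠ 0) :
    g p (m - 1) * g p m * L p m = weightedSum p m := by
  induction m, hm using Nat.le_induction with
  | base =>
    simp only [L, weightedSum, g_two, Nat.add_one_sub_one, Icc_self, sum_singleton, tsub_self,
      pow_zero, one_mul]
    ring
  | succ n hn ih =>
    obtain ⟨k, rfl⟩ := Nat.exists_eq_add_of_le' (one_le_two.trans hn)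
    have hf : g p (k + 2) * f p (k + 2) = g p (k + 1) :=
      mul_div_cancel₀ _ (hg (k + 2) (by omega) le_rfl)
    have ih := ih fun i hi hik => hg i hi (hik.trans (Nat.le_succ _))
    simp only [Nat.add_sub_cancel] at ih ⊢
    rw [L_succ p hn, weightedSum_succ, ← ih]
    linear_combination g p (k + 1) * (1 + L p (k + 1)) * hf
      - g p (k + 1) * L p (k + 1) * g_add_two p k

theorem fL_sum_form_general (p : ℝ) (m : ℕ) (hm : 2 ≤ m)
    (hg : ∀ i, 2 ≤ i → i ≤ m → g p i ≠ 0) :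
    f p m * L p m =
      (1 / (g p m) ^ 2) *
        ∑ i ∈ Finset.Icc 1 (m - 1), (p * (1 - p)) ^ (m - i - 1) * (g p i) ^ 2 := by
  have hgm : g p m ≠ 0 := hg m hm le_rfl
  rw [← weightedSum, ← g_pred_mul_g_mul_L p hm fun i hi => hg i (by omega), f]
  field_simp

/-- f_m(p) L_m(p) = (1/g_m(p)^2) Σ_{i=1}^{m-1} x^{m-i-1} g_i(p)^2 with x = p(1-p). -/
theorem fL_sum_form (p : ℝ) (hp : p ≠ 1 / 2) (m : ℕ) (hm : 2 ≤ m)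
    (hg : ∀ i, 2 ≤ i → i ≤ m → g p i ≠ 0) :
    f p m * L p m =
      (1 / (g p m) ^ 2) *
        ∑ i ∈ Finset.Icc 1 (m - 1), (p * (1 - p)) ^ (m - i - 1) * (g p i) ^ 2 :=
  fL_sum_form_general p m hm hg
end

section
/- For real p with p ≠ 1/2, p ≠ 0, p ≠ 1, x = p(1-p), g_i(p) = (1-p)^i - p^i, and any integer m ≥ 2: Σ_{i=1}^{m-1} x^{m-i-1} g_i(p)^2 = (x^{m-1}(1-2m)·g_1(p) + g_{2m-1}(p))/g_1(p). -/
/-! Put `a = 1 - p`, `b = p`, so `x = a b` and `g_i = aⁱ - bⁱ`. Expanding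
`g_i² = a²ⁱ - 2 xⁱ + b²ⁱ`, the weighted sum becomes
`∑_{k=0}^{2m-2} aᵏ b^{2m-2-k} - (2m-1) x^{m-1}`, and the geometric sum is `g_{2m-1} / g_1`.
Multiplied by `a - b`, the identity holds for arbitrary `a, b` in a commutative ring, where a
direct induction on `m` proves it. -/

theorem sub_mul_sum_mul_pow_sub_pow_sq {R : Type*} [CommRing R] (a b : R) (n : ℕ) :
    (a - b) * ∑ i ∈ Finset.Icc 1 n, (a * b) ^ (n - i) * (a ^ i - b ^ i) ^ 2 =
      a ^ (2 * n + 1) - b ^ (2 * n + 1) - (2 * n + 1) * (a * b) ^ n * (a - b) := by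
  induction n with
  | zero => simp
  | succ n ih =>
    have shift : ∑ i ∈ Finset.Icc 1 n, (a * b) ^ (n + 1 - i) * (a ^ i - b ^ i) ^ 2 =
        a * b * ∑ i ∈ Finset.Icc 1 n, (a * b) ^ (n - i) * (a ^ i - b ^ i) ^ 2 := by
      rw [Finset.mul_sum]
      refine Finset.sum_congr rfl fun i hi => ?_
      rw [Nat.sub_add_comm (Finset.mem_Icc.mp hi).2, pow_succ]
      ring
    rw [Finset.sum_Icc_succ_top (Nat.le_add_left 1 n), shift, Nat.sub_self, mul_add,
      ← mul_assoc, mul_comm (a - b), mul_assoc, ih]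
    push_cast
    ring

theorem sum_g_sq_general (p : ℝ) (hp : p ≠ 1 / 2) (m : ℕ) (hm : 2 ≤ m) :
    ∑ i ∈ Finset.Icc 1 (m - 1),
        (p * (1 - p)) ^ (m - i - 1) * ((1 - p) ^ i - p ^ i) ^ 2 =
      ((p * (1 - p)) ^ (m - 1) * (1 - 2 * (m : ℝ)) * ((1 - p) ^ 1 - p ^ 1) +
          ((1 - p) ^ (2 * m - 1) - p ^ (2 * m - 1))) / ((1 - p) ^ 1 - p ^ 1) := by
  have hg : (1 - p) ^ 1 - p ^ 1 ≠ 0 := by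
    intro h
    apply hp
    linarith
  obtain ⟨n, rfl⟩ : ∃ n, m = n + 1 := ⟨m - 1, by omega⟩
  have key := sub_mul_sum_mul_pow_sub_pow_sq (1 - p) p n
  rw [eq_div_iff hg, mul_comm, pow_one, pow_one, mul_comm p]
  simp only [Nat.add_sub_cancel, Nat.sub_right_comm _ _ 1] at key ⊢
  rw [show 2 * (n + 1) - 1 = 2 * n + 1 by omega, key]
  push_cast
  ring

/-- Σ_{i=1}^{m-1} x^{m-i-1} g_i(p)^2 = (x^{m-1}(1-2m) g_1(p) + g_{2m-1}(p))/g_1(p). -/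
theorem sum_g_sq (p : ℝ) (hp : p ≠ 1 / 2) (hp0 : p ≠ 0) (hp1 : p ≠ 1) (m : ℕ) (hm : 2 ≤ m) :
    ∑ i ∈ Finset.Icc 1 (m - 1),
        (p * (1 - p)) ^ (m - i - 1) * ((1 - p) ^ i - p ^ i) ^ 2 =
      ((p * (1 - p)) ^ (m - 1) * (1 - 2 * (m : ℝ)) * ((1 - p) ^ 1 - p ^ 1) +
          ((1 - p) ^ (2 * m - 1) - p ^ (2 * m - 1))) / ((1 - p) ^ 1 - p ^ 1) :=
  sum_g_sq_general p hp m hm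
end

section
/- For every integer k ≥ 1, the number of Dyck paths of semilength k whose height is at most 2 equals 2^{k-1}. -/
/-- Prefix height of a path encoded as a list of booleans (`true` = up step (1,1),
`false` = down step (1,-1)) after `i` steps. -/
def pathHeight (w : List Bool) (i : ℕ) : ℤ :=
  ((w.take i).count true : ℤ) - ((w.take i).count false : ℤ)

/-- `w` encodes a Dyck path: it never goes below the x-axis and ends on the x-axis. -/
def IsDyckPath (w : List Bool) : Prop :=
  (∀ i, 0 ≤ pathHeight w i) ∧ pathHeight w w.length = 0

/-- The number of Dyck paths of semilength `k` whose height is at most `n`. -/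
noncomputable def A (n k : ℕ) : ℕ :=
  Nat.card {w : List Bool // w.length = 2 * k ∧ IsDyckPath w ∧ ∀ i, pathHeight w i ≤ n}

namespace DyckAux

/-- Step value. -/
def stp (x : Bool) : ℤ := if x then 1 else -1

/-- Height of a state. -/
def H (a : Bool) : ℤ := if a then 2 else 0

lemma ph_nil (i : ℕ) : pathHeight [] i = 0 := by simp [pathHeight]

lemma ph_zero (w : List Bool) : pathHeight w 0 = 0 := by simp [pathHeight]

lemma ph_cons (x : Bool) (w : List Bool) (i : ℕ) :
    pathHeight (x :: w) (i + 1) = stp x + pathHeight w i := by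
  cases x <;> simp [pathHeight, stp, List.count_cons] <;> push_cast <;> ring

/-- Encoding: given a starting state `a` (`true` = height 2, `false` = height 0) and a
list of successive states, produce the path. -/
def enc : Bool → List Bool → List Bool
  | _, [] => []
  | a, b :: l => (!a) :: b :: enc b l

lemma enc_length (a : Bool) (l : List Bool) : (enc a l).length = 2 * l.length := by
  induction l generalizing a with
  | nil => simp [enc]
  | cons b l ih => simp [enc, ih]; ring

lemma stp_not (a : Bool) : stp (!a) = 1 - H a := by cases a <;> simp [stp, H]

lemma stp_eq (b : Bool) : stp b = H b - 1 := by cases b <;> simp [stp, H]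

lemma enc_bounds (l : List Bool) :
    ∀ a i, -(H a) ≤ pathHeight (enc a l) i ∧ pathHeight (enc a l) i ≤ 2 - H a := by
  induction l with
  | nil => intro a i; cases a <;> simp [enc, ph_nil, H]
  | cons b l ih =>
    intro a i
    match i with
    | 0 => rw [ph_zero]; cases a <;> simp [H]
    | 1 =>
      show _ ≤ pathHeight ((!a) :: b :: enc b l) 1 ∧ pathHeight ((!a) :: b :: enc b l) 1 ≤ _
      rw [show (1 : ℕ) = 0 + 1 from rfl, ph_cons, ph_zero, stp_not]
      cases a <;> simp [H]
    | (i + 2) =>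
      rw [show enc a (b :: l) = (!a) :: b :: enc b l from rfl,
        show i + 2 = (i + 1) + 1 from rfl, ph_cons, ph_cons, stp_not, stp_eq]
      obtain ⟨h1, h2⟩ := ih b i
      constructor <;> linarith

lemma enc_last (l : List Bool) :
    ∀ a, pathHeight (enc a l) (enc a l).length = H (l.getLastD a) - H a := by
  induction l with
  | nil => intro a; simp [enc, ph_nil]
  | cons b l ih =>
    intro a
    show pathHeight ((!a) :: b :: enc b l) ((enc b l).length + 1 + 1) = _
    rw [ph_cons, ph_cons, stp_not, stp_eq, ih b, List.getLastD_cons]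
    ring

lemma enc_inj : ∀ (s₁ s₂ : List Bool) (a : Bool), enc a s₁ = enc a s₂ → s₁ = s₂ := by
  intro s₁
  induction s₁ with
  | nil => intro s₂ a h; cases s₂ <;> simp [enc] at h ⊢
  | cons b l ih =>
    intro s₂ a h
    cases s₂ with
    | nil => simp [enc] at h
    | cons c m =>
      simp only [enc, List.cons.injEq] at h
      obtain ⟨-, hbc, ht⟩ := h
      subst hbc
      exact congrArg (b :: ·) (ih m b ht)

lemma enc_surj : ∀ (m : ℕ) (a : Bool) (w : List Bool), w.length = 2 * m →
    (∀ i, -(H a) ≤ pathHeight w i ∧ pathHeight w i ≤ 2 - H a) →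
    ∃ s, s.length = m ∧ enc a s = w := by
  intro m
  induction m with
  | zero =>
    intro a w hw _
    refine ⟨[], rfl, ?_⟩
    simp at hw
    simp [enc, hw]
  | succ m ih =>
    intro a w hw hb
    match w with
    | [] => simp at hw
    | [x] => simp at hw; omega
    | x :: y :: w' =>
      have hx : x = !a := by
        have h1 := hb 1
        rw [show (1 : ℕ) = 0 + 1 from rfl, ph_cons, ph_zero] at h1
        cases a <;> cases x <;> simp [stp, H] at h1 ⊢ <;> omega
      have hw' : w'.length = 2 * m := by simp at hw; omega
      have hb' : ∀ i, -(H y) ≤ pathHeight w' i ∧ pathHeight w' i ≤ 2 - H y := by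
        intro i
        have h2 := hb (i + 2)
        rw [show i + 2 = (i + 1) + 1 from rfl, ph_cons, ph_cons, hx, stp_not, stp_eq] at h2
        obtain ⟨h1, h2⟩ := h2
        constructor <;> linarith
      obtain ⟨s, hs, hsw⟩ := ih y w' hw' hb'
      exact ⟨y :: s, by simp [hs], by simp [enc, hsw, hx]⟩

lemma getLastD_concat (l : List Bool) (b d : Bool) : (l ++ [b]).getLastD d = b := by
  induction l generalizing d with
  | nil => rfl
  | cons c l ih => rw [List.cons_append, List.getLastD_cons]; exact ih c

lemma H_false : H false = 0 := rfl

end DyckAux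

open DyckAux in
/-- For k ≥ 1, there are exactly 2^{k-1} Dyck paths of semilength k and height at most 2. -/
theorem dyck_height_two_count (k : ℕ) (hk : 1 ≤ k) : A 2 k = 2 ^ (k - 1) := by
  classical
  set P : List Bool → Prop :=
    fun w => w.length = 2 * k ∧ IsDyckPath w ∧ ∀ i, pathHeight w i ≤ (2 : ℕ) with hP
  have hmem : ∀ l : List Bool, l.length = k - 1 → P (enc false (l ++ [false])) := by
    intro l hl
    refine ⟨?_, ⟨?_, ?_⟩, ?_⟩
    · rw [enc_length]; simp [hl]; omega
    · intro i
      have := (enc_bounds (l ++ [false]) false i).1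
      rw [H_false] at this; linarith
    · rw [enc_last, getLastD_concat, H_false]; ring
    · intro i
      have := (enc_bounds (l ++ [false]) false i).2
      rw [H_false] at this
      push_cast
      linarith
  let f : {l : List Bool // l.length = k - 1} → {w : List Bool // P w} :=
    fun l => ⟨enc false (l.1 ++ [false]), hmem l.1 l.2⟩
  have hbij : Function.Bijective f := by
    constructor
    · rintro ⟨l₁, h₁⟩ ⟨l₂, h₂⟩ h
      simp only [f, Subtype.mk.injEq] at h
      have := enc_inj _ _ _ h
      have := congrArg List.dropLast this
      simpa [List.dropLast_concat] using this
    · rintro ⟨w, hw, ⟨hpos, hend⟩, hle⟩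
      have hb : ∀ i, -(H false) ≤ pathHeight w i ∧ pathHeight w i ≤ 2 - H false := by
        intro i
        rw [H_false]
        refine ⟨by simpa using hpos i, ?_⟩
        have := hle i; push_cast at this; linarith
      obtain ⟨s, hs, hsw⟩ := enc_surj k false w hw hb
      have hne : s ≠ [] := by
        intro h; subst h; simp at hs; omega
      obtain ⟨l, b, hcat⟩ := (List.eq_nil_or_concat s).resolve_left hne
      rw [List.concat_eq_append] at hcat
      subst hcat
      have hlast : b = false := by
        have h0 : pathHeight w w.length = 0 := hend
        rw [← hsw, enc_last, getLastD_concat, H_false] at h0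
        cases b
        · rfl
        · simp [H] at h0
      subst hlast
      have hll : l.length = k - 1 := by simp at hs; omega
      exact ⟨⟨l, hll⟩, Subtype.ext hsw⟩
  have h1 : A 2 k = Nat.card {w : List Bool // P w} := rfl
  rw [h1, ← Nat.card_eq_of_bijective f hbij]
  have e : {l : List Bool // l.length = k - 1} ≃ List.Vector Bool (k - 1) :=
    Equiv.refl _
  rw [Nat.card_congr e, Nat.card_eq_fintype_card, card_vector]
  simp
end

section
/- Walks on {0,...,m} from m-1 to m avoiding 0, with k+1 right steps and k left steps, are in bijection with Dyck paths of semilength k with height at most m-2 (for m ≥ 2): the number B(m,k) of such walks satisfies B(m,k) = A(m-2,k). -/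
/-- Position of the walk on {0,…,m} started at m-1 after following the first `i`
steps of `w` (`true` = step right, `false` = step left). -/
def walkPos (m : ℕ) (w : List Bool) (i : ℕ) : ℤ :=
  (m : ℤ) - 1 + ((w.take i).count true : ℤ) - ((w.take i).count false : ℤ)

/-- The step sequence `w` drives the walk started at m-1 to m, staying strictly
between 0 and m before its final step (i.e. the walk reaches m before reaching 0,
and `w` stops at that moment). -/
def HitsTopFirst (m : ℕ) (w : List Bool) : Prop :=
  walkPos m w w.length = m ∧ ∀ i < w.length, 0 < walkPos m w i ∧ walkPos m w i < m
/-- The number B(m,k) of walks from m-1 to m avoiding 0, with k+1 right steps and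
k left steps. -/
noncomputable def B (m k : ℕ) : ℕ :=
  Nat.card {w : List Bool // HitsTopFirst m w ∧ w.count true = k + 1 ∧ w.count false = k}

/-! Remove the final step of the walk and reflect what remains. Where the reflected path is at
height `h`, the walk is at `m - 1 - h`, so the walk stays in `(0, m)` before its last step exactly
when the path stays in `[0, m - 2]`. The last step can reach `m` only from `m - 1`, so it is a right
step and the path ends at height `0`. -/

lemma walkPos_eq_add_pathHeight (m : ℕ) (w : List Bool) (i : ℕ) :
    walkPos m w i = m - 1 + pathHeight w i := by
  unfold walkPos pathHeight
  ring

lemma count_map_not (b : Bool) (l : List Bool) : (l.map not).count b = l.count (!b) := by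
  simpa using List.count_map_of_injective l not Bool.not_injective (!b)

lemma pathHeight_map_not (w : List Bool) (i : ℕ) :
    pathHeight (w.map not) i = -pathHeight w i := by
  simp only [pathHeight, ← List.map_take, count_map_not, Bool.not_true, Bool.not_false]
  ring

lemma pathHeight_append_of_le_length {u : List Bool} {i : ℕ} (hi : i ≤ u.length)
    (v : List Bool) : pathHeight (u ++ v) i = pathHeight u i := by
  simp only [pathHeight, List.take_append_of_le_length hi]

lemma pathHeight_length (w : List Bool) :
    pathHeight w w.length = w.count true - w.count false := by
  simp only [pathHeight, List.take_length]

lemma forall_pathHeight_iff (p : ℤ → Prop) (w : List Bool) :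
    (∀ i, p (pathHeight w i)) ↔ ∀ i ≤ w.length, p (pathHeight w i) := by
  refine ⟨fun h i _ => h i, fun h i => ?_⟩
  rcases le_total i w.length with hi | hi
  · exact h i hi
  · simpa only [pathHeight, List.take_of_length_le hi, List.take_length] using h _ le_rfl

lemma hitsTopFirst_append_singleton_iff (n : ℕ) (u : List Bool) (b : Bool) :
    HitsTopFirst (n + 2) (u ++ [b]) ↔
      b = true ∧ pathHeight u u.length = 0 ∧ ∀ i, -n ≤ pathHeight u i ∧ pathHeight u i ≤ 0 := by
  have hfinal : pathHeight (u ++ [b]) (u ++ [b]).length =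
      pathHeight u u.length + if b then 1 else -1 := by
    rw [pathHeight_length, pathHeight_length]
    cases b <;> simp only [List.count_append, List.count_singleton_self, List.count_singleton,
      Bool.true_beq, Bool.false_beq, Bool.not_true, Bool.false_eq_true, if_false, if_true,
      Nat.cast_add, Nat.cast_one, add_zero] <;> ring
  have hprefix : (∀ i < (u ++ [b]).length, 0 < walkPos (n + 2) (u ++ [b]) i ∧
      walkPos (n + 2) (u ++ [b]) i < (n + 2 : ℕ)) ↔
      ∀ i, -n ≤ pathHeight u i ∧ pathHeight u i ≤ 0 := by
    rw [forall_pathHeight_iff (fun h => -n ≤ h ∧ h ≤ 0)]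
    simp only [List.length_append, List.length_singleton, Nat.lt_succ_iff,
      walkPos_eq_add_pathHeight]
    refine forall₂_congr fun i hi => ?_
    rw [pathHeight_append_of_le_length hi]
    push_cast
    omega
  unfold HitsTopFirst
  rw [hprefix, walkPos_eq_add_pathHeight, hfinal]
  constructor
  · rintro ⟨hend, hbound⟩
    have hlast := (hbound u.length).2
    cases b
    · simp only [Bool.false_eq_true, if_false, Nat.cast_add, Nat.cast_ofNat] at hend
      omega
    · exact ⟨rfl, by omega, hbound⟩
  · rintro ⟨rfl, hzero, hbound⟩
    refine ⟨?_, hbound⟩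
    simp only [if_true, hzero]
    push_cast
    ring

lemma hitsTopFirst_map_not_append_singleton_iff (n : ℕ) (v : List Bool) (b : Bool) :
    HitsTopFirst (n + 2) (v.map not ++ [b]) ↔
      b = true ∧ IsDyckPath v ∧ ∀ i, pathHeight v i ≤ n := by
  rw [hitsTopFirst_append_singleton_iff, List.length_map]
  simp only [IsDyckPath, pathHeight_map_not, neg_eq_zero, neg_le_neg_iff, Left.neg_nonpos_iff,
    forall_and]
  tauto

lemma hitsTopFirst_and_count_iff (n k : ℕ) (w : List Bool) :
    (HitsTopFirst (n + 2) w ∧ w.count true = k + 1 ∧ w.count false = k) ↔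
      ∃ v, (v.length = 2 * k ∧ IsDyckPath v ∧ ∀ i, pathHeight v i ≤ n) ∧
        v.map not ++ [true] = w := by
  constructor
  · rintro ⟨hw, htrue, hfalse⟩
    obtain ⟨u, b, rfl⟩ := (List.eq_nil_or_concat' w).resolve_left (by rintro rfl; simp at htrue)
    have hu : (u.map not).map not = u := by simp [Function.comp_def]
    rw [← hu, hitsTopFirst_map_not_append_singleton_iff] at hw
    obtain ⟨rfl, hdyck, hbound⟩ := hw
    refine ⟨u.map not, ⟨?_, hdyck, hbound⟩, by rw [hu]⟩
    simp only [List.count_append, List.count_singleton_self, List.count_singleton,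
      Bool.true_beq, Bool.false_eq_true, if_false, add_zero] at htrue hfalse
    rw [List.length_map, ← List.count_true_add_count_false]
    omega
  · rintro ⟨v, ⟨hlen, hdyck, hbound⟩, rfl⟩
    have hbalanced : v.count true = v.count false := by
      have := hdyck.2
      rw [pathHeight_length] at this
      omega
    have hsum := List.count_true_add_count_false v
    refine ⟨(hitsTopFirst_map_not_append_singleton_iff n v true).2 ⟨rfl, hdyck, hbound⟩, ?_, ?_⟩ <;>
      simp only [List.count_append, count_map_not, List.count_singleton_self, List.count_singleton,
        Bool.not_true, Bool.not_false, Bool.true_beq, Bool.false_eq_true, if_false, add_zero] <;>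
      omega

/-- Such walks are in bijection with Dyck paths of semilength k and height at most
m-2: B(m,k) = A(m-2,k). -/
theorem walk_dyck_correspondence (m k : ℕ) (hm : 2 ≤ m) : B m k = A (m - 2) k := by
  obtain ⟨n, rfl⟩ : ∃ n, m = n + 2 := ⟨m - 2, by omega⟩
  let f : {v : List Bool // v.length = 2 * k ∧ IsDyckPath v ∧ ∀ i, pathHeight v i ≤ n} →
      List Bool := fun v => v.1.map not ++ [true]
  have hf : Function.Injective f := fun v v' h =>
    Subtype.ext (List.map_injective_iff.2 Bool.not_injective (List.append_cancel_right h))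
  rw [Nat.add_sub_cancel, B, A, ← Nat.card_range_of_injective hf]
  refine Nat.card_congr <| Equiv.subtypeEquivRight (q := (· ∈ Set.range f)) fun w => ?_
  rw [hitsTopFirst_and_count_iff]
  simp [f]
end
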